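/- If Γ depends on the past with respect to a set ℳ of epistemic transition structures and M₁, M₂ ∈ ℳ satisfy RT_k(M₁) = RT_k(⟦Γ⟧M₁) = RT_k(⟦Γ⟧M₂) = RT_k(M₂) for some k ≥ 0, then RT_{k+1}(⟦Γ⟧M₁) = RT_{k+1}(⟦Γ⟧M₂). -/
import Mathlib


namespace KBP

/-- `k`-step reachable states of a transition system with initial states `S0`. -/
def RSk {S : Type} (S0 : Set S) (T : Set (S × S)) : ℕ → Set S
  | 0 => S0
  | k + 1 => RSk S0 T k ∪ {s' | ∃ s ∈ RSk S0 T k, (s, s') ∈ T}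

/-- `k`-step reachable transitions. -/
def RTk {S : Type} (S0 : Set S) (T : Set (S × S)) : ℕ → Set (S × S)
  | 0 => ∅
  | k + 1 => RTk S0 T k ∪ {p | p ∈ T ∧ p.1 ∈ RSk S0 T k}

/-- All reachable states. -/
def Reach {S : Type} (S0 : Set S) (T : Set (S × S)) : Set S := ⋃ k, RSk S0 T k

/-- Epistemic formulas (with the abbreviations `true`, `∨`, `M` as primitives). -/
inductive EFrm (P A : Type) : Type
  | prop : P → EFrm P A
  | nprop : P → EFrm P A
  | fls : EFrm P A
  | tru : EFrm P A
  | neg : EFrm P A → EFrm P A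
  | and : EFrm P A → EFrm P A → EFrm P A
  | or : EFrm P A → EFrm P A → EFrm P A
  | K : A → EFrm P A → EFrm P A
  | M : A → EFrm P A → EFrm P A

/-- Ordinary (Kripke) satisfaction over the reachable part of an epistemic
transition structure with transition relation `T`. -/
def ksat (E : A → Set (S × S)) (L : S → Set P) (S0 : Set S)
    (T : Set (S × S)) : S → EFrm P A → Prop
  | s, .prop p => p ∈ L s
  | s, .nprop p => p ∉ L s
  | _, .fls => False
  | _, .tru => True
  | s, .neg φ => ¬ ksat E L S0 T s φ
  | s, .and φ ψ => ksat E L S0 T s φ ∧ ksat E L S0 T s ψ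
  | s, .or φ ψ => ksat E L S0 T s φ ∨ ksat E L S0 T s ψ
  | s, .K a φ => ∀ s' ∈ Reach S0 T, (s, s') ∈ E a → ksat E L S0 T s' φ
  | s, .M a φ => ∃ s' ∈ Reach S0 T, (s, s') ∈ E a ∧ ksat E L S0 T s' φ

/-- Ordinary interpretation of an epistemically guarded transition system. -/
def interpT (E : A → Set (S × S)) (L : S → Set P) (S0 : Set S)
    (Γ : Set (EFrm P A × Set (S × S))) (T : Set (S × S)) : Set (S × S) :=
  {p | ∃ g ∈ Γ, p ∈ g.2 ∧ p.1 ∈ Reach S0 T ∧ ksat E L S0 T p.1 g.1}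

/-- A formula depends on the past w.r.t. a class `ℳ` of transition relations. -/
def dependsOnPast (E : A → Set (S × S)) (L : S → Set P) (S0 : Set S)
    (ℳ : Set (Set (S × S))) (φ : EFrm P A) : Prop :=
  ∀ T₁ ∈ ℳ, ∀ T₂ ∈ ℳ, ∀ k : ℕ, RTk S0 T₁ k = RTk S0 T₂ k →
    ∀ s, s ∈ RSk S0 T₁ k → s ∈ RSk S0 T₂ k →
      (ksat E L S0 T₁ s φ ↔ ksat E L S0 T₂ s φ)

lemma RSk_eq_union {S : Type} (S0 : Set S) (T : Set (S × S)) (k : ℕ) :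
    RSk S0 T k = S0 ∪ {s' | ∃ s, (s, s') ∈ RTk S0 T k} := by
  induction k with
  | zero => simp [RSk, RTk]
  | succ k ih =>
    ext s'
    simp only [RSk, RTk, ih, Set.mem_union, Set.mem_setOf_eq]
    constructor
    · rintro ((h | ⟨s, hs⟩) | ⟨s, hs, hT⟩)
      · exact Or.inl h
      · exact Or.inr ⟨s, Or.inl hs⟩
      · exact Or.inr ⟨s, Or.inr ⟨hT, hs⟩⟩
    · rintro (h | ⟨s, (hs | ⟨hT, hs⟩)⟩)
      · exact Or.inl (Or.inl h)
      · exact Or.inl (Or.inr ⟨s, hs⟩)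
      · exact Or.inr ⟨s, hs, hT⟩

lemma RSk_eq_of_RTk_eq {S : Type} {S0 : Set S} {T₁ T₂ : Set (S × S)} {k : ℕ}
    (h : RTk S0 T₁ k = RTk S0 T₂ k) : RSk S0 T₁ k = RSk S0 T₂ k := by
  rw [RSk_eq_union, RSk_eq_union, h]

lemma RSk_subset_Reach {S : Type} (S0 : Set S) (T : Set (S × S)) (k : ℕ) :
    RSk S0 T k ⊆ Reach S0 T := fun s hs => Set.mem_iUnion.2 ⟨k, hs⟩

/-- Stepping lemma: if `Γ` depends on the past w.r.t. `ℳ` and the `k`-step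
pasts of `M₁`, `⟦Γ⟧M₁`, `⟦Γ⟧M₂`, `M₂` all coincide, then the `(k+1)`-step
pasts of the interpretations coincide. -/
theorem interp_step_eq {S P A : Type} (E : A → Set (S × S)) (L : S → Set P)
    (S0 : Set S) (Γ : Set (EFrm P A × Set (S × S)))
    (ℳ : Set (Set (S × S)))
    (hdep : ∀ g ∈ Γ, dependsOnPast E L S0 ℳ g.1)
    (T₁ T₂ : Set (S × S)) (h1 : T₁ ∈ ℳ) (h2 : T₂ ∈ ℳ) (k : ℕ)
    (e1 : RTk S0 T₁ k = RTk S0 (interpT E L S0 Γ T₁) k)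
    (e2 : RTk S0 (interpT E L S0 Γ T₁) k = RTk S0 (interpT E L S0 Γ T₂) k)
    (e3 : RTk S0 (interpT E L S0 Γ T₂) k = RTk S0 T₂ k) :
    RTk S0 (interpT E L S0 Γ T₁) (k + 1)
      = RTk S0 (interpT E L S0 Γ T₂) (k + 1) := by
  have eT : RTk S0 T₁ k = RTk S0 T₂ k := by rw [e1, e2, e3]
  have rs1 : RSk S0 (interpT E L S0 Γ T₁) k = RSk S0 T₁ k :=
    RSk_eq_of_RTk_eq e1.symm
  have rs2 : RSk S0 (interpT E L S0 Γ T₂) k = RSk S0 T₂ k :=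
    RSk_eq_of_RTk_eq e3
  have rsT : RSk S0 T₁ k = RSk S0 T₂ k := RSk_eq_of_RTk_eq eT
  have key : ∀ p : S × S, p.1 ∈ RSk S0 T₁ k →
      (p ∈ interpT E L S0 Γ T₁ ↔ p ∈ interpT E L S0 Γ T₂) := by
    intro p hp
    have hp2 : p.1 ∈ RSk S0 T₂ k := rsT ▸ hp
    constructor
    · rintro ⟨g, hg, hpg, _, hsat⟩
      exact ⟨g, hg, hpg, RSk_subset_Reach S0 T₂ k hp2,
        (hdep g hg T₁ h1 T₂ h2 k eT p.1 hp hp2).1 hsat⟩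
    · rintro ⟨g, hg, hpg, _, hsat⟩
      exact ⟨g, hg, hpg, RSk_subset_Reach S0 T₁ k hp,
        (hdep g hg T₁ h1 T₂ h2 k eT p.1 hp hp2).2 hsat⟩
  show RTk S0 (interpT E L S0 Γ T₁) k ∪ _ = RTk S0 (interpT E L S0 Γ T₂) k ∪ _
  rw [e2]
  congr 1
  ext p
  simp only [Set.mem_setOf_eq, rs1, rs2]
  constructor
  · rintro ⟨hi, hs⟩
    exact ⟨(key p hs).1 hi, rsT ▸ hs⟩
  · rintro ⟨hi, hs⟩
    have hs1 : p.1 ∈ RSk S0 T₁ k := rsT.symm ▸ hs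
    exact ⟨(key p hs1).2 hi, hs1⟩

end KBP
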